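/- For an involution σ in S_n with Biane labeled Motzkin path (μ, λ), the number of visible inversions of σ equals H(μ,λ) = Σ_i H_i, where H_i = λ_i − 1 if μ_i = D and H_i = h_i(μ) if μ_i ∈ {U, L}. -/

import Mathlib

open Finset

/-- Steps of a Motzkin path: up, level, down. -/
inductive Step | U | L | D
deriving DecidableEq

instance instFintypeStep : Fintype Step :=
  ⟨{Step.U, Step.L, Step.D}, fun x => by cases x <;> simp⟩

/-- `μ` is a Motzkin path: every prefix has at least as many `U`'s as `D`'s, and the
total numbers of `U`'s and `D`'s agree. -/
def IsMotzkin {n : ℕ} (μ : Fin n → Step) : Prop :=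
  (∀ k : Fin n, (Finset.univ.filter (fun j => j ≤ k ∧ μ j = Step.D)).card
      ≤ (Finset.univ.filter (fun j => j ≤ k ∧ μ j = Step.U)).card)
  ∧ (Finset.univ.filter (fun j => μ j = Step.U)).card
    = (Finset.univ.filter (fun j => μ j = Step.D)).card

/-- The height of the `i`-th step of `μ`: the larger of the two `y`-coordinates of
the step, i.e. `#{j ≤ i : μ j = U} − #{j < i : μ j = D}`. -/
def height {n : ℕ} (μ : Fin n → Step) (i : Fin n) : ℕ :=
  (Finset.univ.filter (fun j => j ≤ i ∧ μ j = Step.U)).card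
    - (Finset.univ.filter (fun j => j < i ∧ μ j = Step.D)).card

/-- Biane's word of an involution: `U` if `i < σ i`, `L` if `i = σ i`, `D` if `i > σ i`. -/
def bpath {n : ℕ} (σ : Equiv.Perm (Fin n)) (i : Fin n) : Step :=
  if i < σ i then Step.U else if σ i = i then Step.L else Step.D

/-- Biane's label of step `i`: `|{j ≥ i : σ j ≤ σ i}|`. -/
def blabel {n : ℕ} (σ : Equiv.Perm (Fin n)) (i : Fin n) : ℕ :=
  (Finset.univ.filter (fun j => i ≤ j ∧ σ j ≤ σ i)).card

/-! Sort the visible inversions `(i, j)` by their first entry `i`. On a down step the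
condition `σ j ≤ i` is implied, so the fiber is `{j > i : σ j < σ i}`, which is `λ_i` minus
its term `j = i`. On an up or level step `σ` maps the fiber onto the arcs `k ≤ i < σ k` passing
over `i`, and these are the up steps up to `i` not yet closed by a down step before `i`,
whose number is the height. -/

lemma card_filter_univ_prod {α β : Type*} [Fintype α] [Fintype β] (P : α × β → Prop)
    [DecidablePred P] :
    #(univ.filter P) = ∑ a, #(univ.filter fun b => P (a, b)) := by
  simp only [card_filter, Fintype.sum_prod_type]

section Biane

variable {n : ℕ} (σ : Equiv.Perm (Fin n))

lemma bpath_eq_U_iff (i : Fin n) : bpath σ i = Step.U ↔ i < σ i := by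
  unfold bpath
  split_ifs <;> simp_all

lemma bpath_eq_D_iff (i : Fin n) : bpath σ i = Step.D ↔ σ i < i := by
  unfold bpath
  split_ifs with h₁ h₂
  · simpa using h₁.le
  · simp [h₂]
  · simpa using lt_of_le_of_ne (not_lt.mp h₁) h₂

def visibleFiber (i : Fin n) : Finset (Fin n) :=
  univ.filter fun j => i < j ∧ σ j < σ i ∧ σ j ≤ min i (σ i)

lemma blabel_eq_card_add_one (i : Fin n) :
    blabel σ i = #(univ.filter fun j => i < j ∧ σ j < σ i) + 1 := by
  have hsplit : univ.filter (fun j => i ≤ j ∧ σ j ≤ σ i)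
      = insert i (univ.filter fun j => i < j ∧ σ j < σ i) := by
    ext j
    simp only [mem_filter, mem_univ, true_and, mem_insert]
    rcases eq_or_ne j i with rfl | hji
    · simp
    · have hσ : σ j ≠ σ i := σ.injective.ne hji
      simp [hji, le_iff_lt_or_eq, hσ, Ne.symm hji]
  rw [blabel, hsplit, card_insert_of_notMem (by simp)]

lemma card_visibleFiber_of_lt {i : Fin n} (hi : σ i < i) :
    #(visibleFiber σ i) = blabel σ i - 1 := by
  have hfiber : visibleFiber σ i = univ.filter fun j => i < j ∧ σ j < σ i := by
    ext j
    simp only [visibleFiber, mem_filter, mem_univ, true_and, min_eq_right hi.le]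
    exact ⟨fun h => ⟨h.1, h.2.1⟩, fun h => ⟨h.1, h.2, h.2.le⟩⟩
  rw [hfiber, blabel_eq_card_add_one, Nat.add_sub_cancel]

variable {σ}

lemma height_bpath_eq_card_arcs (hσ : Function.Involutive σ) {i : Fin n} (hi : i ≤ σ i) :
    height (bpath σ) i = #(univ.filter fun k => k ≤ i ∧ i < σ k) := by
  have hU : univ.filter (fun k => k ≤ i ∧ bpath σ k = Step.U)
      = univ.filter (fun k => k ≤ i ∧ i < σ k) ∪ univ.filter (fun k => k < σ k ∧ σ k ≤ i) := by
    ext k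
    simp only [mem_filter, mem_univ, true_and, mem_union, bpath_eq_U_iff]
    constructor
    · rintro ⟨hki, hk⟩
      exact (lt_or_ge i (σ k)).imp (⟨hki, ·⟩) (⟨hk, ·⟩)
    · rintro (⟨hki, hk⟩ | ⟨hk, hki⟩)
      exacts [⟨hki, hki.trans_lt hk⟩, ⟨hk.le.trans hki, hk⟩]
  have hdisj : Disjoint (univ.filter fun k => k ≤ i ∧ i < σ k)
      (univ.filter fun k => k < σ k ∧ σ k ≤ i) := by
    simp only [disjoint_left, mem_filter, mem_univ, true_and]
    exact fun k hk hk' => hk.2.not_ge hk'.2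
  have hD : #(univ.filter fun k => k < σ k ∧ σ k ≤ i)
      = #(univ.filter fun j => j < i ∧ bpath σ j = Step.D) := by
    refine card_nbij' σ σ ?_ ?_ (fun k _ => hσ k) (fun j _ => hσ j)
    · intro k hk
      simp only [coe_filter, Set.mem_ofPred_eq, mem_univ, true_and, bpath_eq_D_iff, hσ k] at hk ⊢
      refine ⟨hk.2.lt_of_ne fun hki => ?_, hk.1⟩
      have : σ i = k := by rw [← hki, hσ k]
      exact (hk.1.trans_eq hki).not_ge (this ▸ hi)
    · intro j hj
      simp only [coe_filter, Set.mem_ofPred_eq, mem_univ, true_and, bpath_eq_D_iff, hσ j] at hj ⊢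
      exact ⟨hj.2, hj.1.le⟩
  rw [height, hU, card_union_of_disjoint hdisj, hD, Nat.add_sub_cancel]

lemma card_visibleFiber_of_le (hσ : Function.Involutive σ) {i : Fin n} (hi : i ≤ σ i) :
    #(visibleFiber σ i) = height (bpath σ) i := by
  rw [height_bpath_eq_card_arcs hσ hi]
  refine card_nbij' σ σ ?_ ?_ (fun j _ => hσ j) (fun k _ => hσ k)
  · intro j hj
    simp only [visibleFiber, coe_filter, Set.mem_ofPred_eq, mem_univ, true_and, hσ j,
      min_eq_left hi] at hj ⊢
    exact ⟨hj.2.2, hj.1⟩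
  · intro k hk
    simp only [visibleFiber, coe_filter, Set.mem_ofPred_eq, mem_univ, true_and, hσ k,
      min_eq_left hi] at hk ⊢
    refine ⟨hk.2, (hk.1.trans hi).lt_of_ne fun hk' => ?_, hk.1⟩
    exact hk.2.ne (by rw [hk', hσ i])

end Biane

/-- For an involution `σ` with Biane labeled Motzkin path `(μ, λ)`, the number of
visible inversions equals `H(μ,λ) = Σ_i H_i` where `H_i = λ_i − 1` on down steps
and `H_i = h_i(μ)` on up and level steps. -/
theorem visible_inversions_eq_H {n : ℕ} (σ : Equiv.Perm (Fin n))
    (hinv : ∀ i, σ (σ i) = i) :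
    (Finset.univ.filter (fun p : Fin n × Fin n =>
        p.1 < p.2 ∧ σ p.2 < σ p.1 ∧ σ p.2 ≤ min p.1 (σ p.1))).card
      = ∑ i : Fin n,
          (if bpath σ i = Step.D then blabel σ i - 1 else height (bpath σ) i) := by
  rw [card_filter_univ_prod]
  refine sum_congr rfl fun i _ => ?_
  split_ifs with hD
  · exact card_visibleFiber_of_lt σ ((bpath_eq_D_iff σ i).mp hD)
  · exact card_visibleFiber_of_le hinv (not_lt.mp (mt (bpath_eq_D_iff σ i).mpr hD))
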